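/- For the half-plus/half-minus vector ã with n/2 coordinates equal to 1/√n and n/2 coordinates equal to −1/√n (n even), h_{2k}(ã) = (n/2 + k − 1)! / (k!·(n/2 − 1)!·n^k). -/

import Mathlib

open Finset

/-!
Peeling off one variable gives `h_{j+1}(x, y) = x h_j(x, y) + h_{j+1}(y)`; applied twice to a pair
`x, -x` of opposite variables it yields `h_{j+2}(x, -x, y) = x² h_j(x, -x, y) + h_{j+2}(y)`. For
`m` coordinates `1` and `m` coordinates `-1` this is Pascal's recurrence for multisets, so
`h_{2i} = multichoose m i` (the coefficient of `t^{2i}` in `(1 - t²)^{-m}`). Scaling the vector by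
`1/√n` multiplies `h_{2k}` by `n^{-k}`.
-/

/-- The complete homogeneous symmetric polynomial of degree `k` in `n` real variables. -/
noncomputable def chs (n k : ℕ) (a : Fin n → ℝ) : ℝ :=
  ∑ s ∈ (Finset.univ : Finset (Fin n)).sym k, (Multiset.map a s.1).prod

/-- The half-plus/half-minus vector: `n/2` coordinates `1/√n` and `n/2` coordinates `-1/√n`. -/
noncomputable def halfVec (n : ℕ) : Fin n → ℝ :=
  fun i => if (i : ℕ) < n / 2 then 1 / Real.sqrt n else -(1 / Real.sqrt n)

namespace MvPolynomial

variable {σ R : Type*} [Fintype σ] [DecidableEq σ]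

section CommSemiring

variable [CommSemiring R]

theorem eval_hsymm (a : σ → R) (n : ℕ) :
    eval a (hsymm σ R n) = ∑ s : Sym σ n, (s.1.map a).prod := by
  simp [hsymm, map_sum, map_multiset_prod, Multiset.map_map]

theorem eval_hsymm_comp_equiv {τ : Type*} [Fintype τ] [DecidableEq τ] (e : σ ≃ τ) (a : τ → R)
    (n : ℕ) : eval (a ∘ e) (hsymm σ R n) = eval a (hsymm τ R n) := by
  rw [← eval_rename, rename_hsymm]

theorem eval_hsymm_const_mul (c : R) (a : σ → R) (n : ℕ) :
    eval (fun i => c * a i) (hsymm σ R n) = c ^ n * eval a (hsymm σ R n) := by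
  simp only [eval_hsymm, mul_sum, Multiset.prod_map_mul, Multiset.map_const',
    Multiset.prod_replicate]
  exact sum_congr rfl fun s _ => by rw [s.2]

theorem hsymm_option_succ (n : ℕ) :
    hsymm (Option σ) R (n + 1) =
      X none * hsymm (Option σ) R n + rename some (hsymm σ R (n + 1)) := by
  unfold hsymm
  refine ((symOptionSuccEquiv (α := σ) (n := n)).symm.sum_comp _).symm.trans ?_
  rw [Fintype.sum_sum_type, mul_sum, map_sum]
  congr 1 <;> refine sum_congr rfl fun s _ => ?_
  · show ((SymOptionSuccEquiv.decode (Sum.inl s) : Multiset (Option σ)).map X).prod = _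
    rw [SymOptionSuccEquiv.decode_inl, Sym.coe_cons, Multiset.map_cons, Multiset.prod_cons]
    rfl
  · show ((SymOptionSuccEquiv.decode (Sum.inr s) : Multiset (Option σ)).map X).prod = _
    rw [SymOptionSuccEquiv.decode_inr, Sym.coe_map, Multiset.map_map, map_multiset_prod,
      Multiset.map_map]
    simp only [Function.comp_def, rename_X]
    rfl

end CommSemiring

theorem eval_hsymm_option_option_of_eq_neg [CommRing R] (a : Option (Option σ) → R)
    (ha : a none = -a (some none)) (n : ℕ) :
    eval a (hsymm _ R (n + 2)) =
      a (some none) ^ 2 * eval a (hsymm _ R n) + eval (a ∘ some ∘ some) (hsymm σ R (n + 2)) := by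
  have h₁ := congrArg (eval a) (hsymm_option_succ (σ := Option σ) (R := R) (n + 1))
  have h₂ := congrArg (eval a) (hsymm_option_succ (σ := Option σ) (R := R) n)
  have h₃ := congrArg (eval (a ∘ some)) (hsymm_option_succ (σ := σ) (R := R) (n + 1))
  simp only [map_add, map_mul, eval_X, eval_rename, Function.comp_apply, Function.comp_assoc]
    at h₁ h₂ h₃
  linear_combination h₁ + h₃ - a (some none) * h₂ +
    (eval a (hsymm _ R (n + 1)) - a (some none) * eval a (hsymm _ R n)) * ha

end MvPolynomial

def optionOptionSumEquiv (α β : Type*) : Option (Option (α ⊕ β)) ≃ Option α ⊕ Option β where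
  toFun
    | none => .inr none
    | some none => .inl none
    | some (some (.inl a)) => .inl (some a)
    | some (some (.inr b)) => .inr (some b)
  invFun
    | .inl none => some none
    | .inr none => none
    | .inl (some a) => some (some (.inl a))
    | .inr (some b) => some (some (.inr b))
  left_inv := by rintro (_ | _ | _ | _) <;> rfl
  right_inv := by rintro ((_ | _) | (_ | _)) <;> rfl

open MvPolynomial

theorem eval_hsymm_sumElim_one_neg_one {R : Type*} [CommRing R] (m i : ℕ) :
    eval (Sum.elim 1 (-1) : Fin m ⊕ Fin m → R) (hsymm _ R (2 * i)) = m.multichoose i := by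
  induction m generalizing i with
  | zero =>
    cases i with
    | zero => simp
    | succ i => simp [hsymm]
  | succ m ihm =>
    induction i with
    | zero => simp
    | succ i ih =>
      let e := (optionOptionSumEquiv (Fin m) (Fin m)).trans
        (Equiv.sumCongr (finSuccEquiv m).symm (finSuccEquiv m).symm)
      have he : ((Sum.elim 1 (-1) : Fin (m + 1) ⊕ Fin (m + 1) → R) ∘ e) ∘ some ∘ some =
          (Sum.elim 1 (-1) : Fin m ⊕ Fin m → R) := by
        ext (_ | _) <;> rfl
      rw [← eval_hsymm_comp_equiv e, show 2 * (i + 1) = 2 * i + 2 by ring,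
        eval_hsymm_option_option_of_eq_neg _ (by simp [e, optionOptionSumEquiv]),
        he, eval_hsymm_comp_equiv, ih, ← mul_add_one, ihm, Nat.multichoose_succ_succ]
      simp [e, optionOptionSumEquiv, add_comm]

theorem Nat.cast_multichoose_eq_factorial_div {K : Type*} [DivisionSemiring K] [CharZero K]
    {m : ℕ} (hm : 0 < m) (k : ℕ) :
    (m.multichoose k : K) = (m + k - 1).factorial / (k.factorial * (m - 1).factorial) := by
  rw [Nat.multichoose_eq, Nat.cast_choose K (by omega), show m + k - 1 - k = m - 1 by omega]

theorem chs_eq_eval_hsymm (n k : ℕ) (a : Fin n → ℝ) : chs n k a = eval a (hsymm (Fin n) ℝ k) := by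
  rw [chs, sym_univ, eval_hsymm]

theorem halfVec_comp_finSumFinEquiv (m : ℕ) :
    halfVec (m + m) ∘ finSumFinEquiv =
      fun x => 1 / √(m + m : ℕ) * (Sum.elim 1 (-1) : Fin m ⊕ Fin m → ℝ) x := by
  ext (i | i) <;> simp [halfVec, show (m + m) / 2 = m by omega]

theorem stmt8_general (n k : ℕ) (hn : 0 < n) (hne : Even n) :
    chs n (2 * k) (halfVec n) =
      ((n / 2 + k - 1).factorial : ℝ) /
        ((k.factorial : ℝ) * ((n / 2 - 1).factorial : ℝ) * (n : ℝ) ^ k) := by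
  obtain ⟨m, rfl⟩ := hne
  have hm : 0 < m := by omega
  have hsqrt : (1 / √(m + m : ℕ)) ^ (2 * k) = 1 / ((m + m : ℕ) : ℝ) ^ k := by
    rw [pow_mul, div_pow, one_pow, Real.sq_sqrt (Nat.cast_nonneg _), div_pow, one_pow]
  calc chs (m + m) (2 * k) (halfVec (m + m))
      = eval (halfVec (m + m) ∘ finSumFinEquiv) (hsymm (Fin m ⊕ Fin m) ℝ (2 * k)) := by
        rw [chs_eq_eval_hsymm, eval_hsymm_comp_equiv]
    _ = (1 / √(m + m : ℕ)) ^ (2 * k) * m.multichoose k := by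
        rw [halfVec_comp_finSumFinEquiv, eval_hsymm_const_mul, eval_hsymm_sumElim_one_neg_one]
    _ = _ := by
        rw [hsqrt, Nat.cast_multichoose_eq_factorial_div hm, show (m + m) / 2 = m by omega]
        field_simp

theorem stmt8 (n k : ℕ) (hn : 0 < n) (hne : Even n) (hk : 1 ≤ k) :
    chs n (2 * k) (halfVec n) =
      ((n / 2 + k - 1).factorial : ℝ) /
        ((k.factorial : ℝ) * ((n / 2 - 1).factorial : ℝ) * (n : ℝ) ^ k) :=
  stmt8_general n k hn hne
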